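/- For every x ∈ X and every t ≥ 0, the diagonal heat kernel of the hierarchical Laplacian equals p(t,x,x) = (1 − 1/ν) Σ_{s=0}^∞ e^{−p^s t} / ν^s (in particular it is independent of x). -/

import Mathlib

noncomputable section
open scoped ENNReal

def HX (ν : ℕ) : Type := {x : ℕ → Fin ν // ∃ N, ∀ n, N ≤ n → (x n : ℕ) = 0}
instance (ν : ℕ) : DecidableEq (HX ν) := Classical.decEq _
abbrev Hl2 (ν : ℕ) : Type := lp (fun _ : HX ν => ℝ) 2
def cube (ν : ℕ) (r : ℕ) (x : HX ν) : Set (HX ν) := {y | ∀ n, r ≤ n → y.1 n = x.1 n}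
def hdelta (ν : ℕ) (x : HX ν) : Hl2 ν := lp.single 2 x 1
def cubeSum (ν r : ℕ) (x : HX ν) (ψ : Hl2 ν) : ℝ := ∑' y : cube ν r x, ψ y
def IsHierLap (ν : ℕ) (p : ℝ) (Δ : Hl2 ν →L[ℝ] Hl2 ν) : Prop :=
  ∀ ψ x, Δ ψ x = ∑' r : ℕ,
    (1 - p) * p ^ r * (((ν : ℝ) ^ (r + 1))⁻¹ * cubeSum ν (r + 1) x ψ - ψ x)

/-- Heat kernel `p(t,x,y) = ⟨exp(tΔ_h) δ_y, δ_x⟩`. -/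
def heatK (ν : ℕ) (Δ : Hl2 ν →L[ℝ] Hl2 ν) (t : ℝ) (x y : HX ν) : ℝ :=
  @inner ℝ _ _ (NormedSpace.exp (t • Δ) (hdelta ν y)) (hdelta ν x)

/-! The vectors `fₛ = ν⁻ˢ 𝟙_{Q⁽ˢ⁾(x)}` satisfy `f₀ = δₓ` and `‖fₛ‖ = ν^(-s/2)`, so
`δₓ = ∑ₛ (fₛ - fₛ₊₁)` in `ℓ²`. Averaging over cubes of rank `r` maps `fₛ` to `f_{max r s}`, so
`eₛ = fₛ - fₛ₊₁` is fixed by the averages of rank `≤ s` and killed by the others; hence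
`Δ_h eₛ = -(∑_{r ≥ s} a_{r+1}) eₛ = -pˢ eₛ`. Therefore `exp(tΔ_h) δₓ = ∑ₛ e^{-pˢt} eₛ`, and
evaluating at `x`, where `eₛ(x) = (1 - ν⁻¹) ν⁻ˢ`, gives the formula. -/

theorem Summable.hasSum_sub_succ {G : Type*} [AddCommGroup G] [TopologicalSpace G]
    [IsTopologicalAddGroup G] {f : ℕ → G} (hf : Summable f) :
    HasSum (fun n => f n - f (n + 1)) (f 0) := by
  have hshift : HasSum (fun n => f (n + 1)) (∑' n, f n - f 0) := by
    simpa using (hasSum_nat_add_iff' 1).2 hf.hasSum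
  simpa using hf.hasSum.sub hshift

theorem NormedSpace.exp_apply_of_apply_eq_smul {𝕜 E : Type*} [RCLike 𝕜] [NormedAddCommGroup E]
    [NormedSpace 𝕜 E] [CompleteSpace E] {A : E →L[𝕜] E} {v : E} {c : 𝕜} (h : A v = c • v) :
    NormedSpace.exp A v = NormedSpace.exp c • v := by
  have hpow : ∀ n : ℕ, (A ^ n) v = c ^ n • v := by
    intro n
    induction n with
    | zero => simp
    | succ n ih => rw [pow_succ, mul_apply_eq_comp, h, map_smul, ih, smul_smul, ← pow_succ']
  have hA := (NormedSpace.exp_series_hasSum_exp' (𝕂 := 𝕜) A).mapL (ContinuousLinearMap.apply 𝕜 E v)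
  have hc := (NormedSpace.exp_series_hasSum_exp' (𝕂 := 𝕜) c).smul_const v
  refine hA.unique (hc.congr_fun fun n => ?_)
  simp [hpow, smul_smul]

theorem hasSum_ite_geometric_tail {p : ℝ} (hp : |p| < 1) (s : ℕ) :
    HasSum (fun r => if s ≤ r then (1 - p) * p ^ r else 0) (p ^ s) := by
  refine (hasSum_nat_add_iff' s).1 ?_
  have hp1 : 1 - p ≠ 0 := by linarith [(abs_lt.1 hp).2]
  have htail := (hasSum_geometric_of_abs_lt_one hp).mul_left ((1 - p) * p ^ s)
  rw [show (1 - p) * p ^ s * (1 - p)⁻¹ = p ^ s by field_simp] at htail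
  rw [Finset.sum_eq_zero fun r hr => if_neg (by simpa using hr), sub_zero]
  refine htail.congr_fun fun n => ?_
  rw [if_pos (Nat.le_add_left s n), pow_add]
  ring

theorem HX.pos_card {ν : ℕ} (x : HX ν) : 0 < ν := Fin.pos (x.1 0)

namespace HierarchicalLaplacian

variable {ν : ℕ}

theorem mem_cube_self (r : ℕ) (x : HX ν) : x ∈ cube ν r x := fun _ _ => rfl

theorem cube_mono {r s : ℕ} (h : r ≤ s) (x : HX ν) : cube ν r x ⊆ cube ν s x :=
  fun _ hy n hn => hy n (h.trans hn)

theorem mem_cube_comm {r : ℕ} {x y : HX ν} : y ∈ cube ν r x ↔ x ∈ cube ν r y :=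
  ⟨fun h n hn => (h n hn).symm, fun h n hn => (h n hn).symm⟩

theorem cube_eq_of_mem {r : ℕ} {x z : HX ν} (h : z ∈ cube ν r x) : cube ν r z = cube ν r x :=
  Set.ext fun _ => ⟨fun hy n hn => (hy n hn).trans (h n hn),
    fun hy n hn => (hy n hn).trans (h n hn).symm⟩

theorem cube_zero (x : HX ν) : cube ν 0 x = {x} :=
  Set.ext fun y => ⟨fun hy => Subtype.ext <| funext fun n => hy n n.zero_le,
    fun hy => hy ▸ mem_cube_self 0 y⟩

def cubeEquivFun (r : ℕ) (x : HX ν) : cube ν r x ≃ (Fin r → Fin ν) where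
  toFun y i := y.1.1 i
  invFun g :=
    ⟨⟨fun n => if h : n < r then g ⟨n, h⟩ else x.1 n, by
        obtain ⟨N, hN⟩ := x.2
        exact ⟨max r N, fun n hn => by
          simpa [dif_neg (by omega : ¬ n < r)] using hN n (le_of_max_le_right hn)⟩⟩,
      fun n hn => dif_neg (by omega : ¬ n < r)⟩
  left_inv y := by
    apply Subtype.ext; apply Subtype.ext; funext n
    by_cases h : n < r
    · simp [h]
    · simpa [h] using (y.2 n (by omega)).symm
  right_inv g := by funext i; simp [i.2]

instance (r : ℕ) (x : HX ν) : Fintype (cube ν r x) := Fintype.ofEquiv _ (cubeEquivFun r x).symm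

theorem card_toFinset_cube (r : ℕ) (x : HX ν) : (cube ν r x).toFinset.card = ν ^ r := by
  simp [Set.toFinset_card, Fintype.card_congr (cubeEquivFun r x)]

theorem cubeSum_eq_sum (r : ℕ) (z : HX ν) (ψ : Hl2 ν) :
    cubeSum ν r z ψ = ∑ y ∈ (cube ν r z).toFinset, ψ y := by
  rw [cubeSum, tsum_fintype]
  exact Finset.sum_set_coe _

theorem cubeSum_sub (r : ℕ) (z : HX ν) (ψ φ : Hl2 ν) :
    cubeSum ν r z (ψ - φ) = cubeSum ν r z ψ - cubeSum ν r z φ := by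
  simp only [cubeSum_eq_sum, lp.coeFn_sub, Pi.sub_apply, Finset.sum_sub_distrib]

def cubeUniform (ν r : ℕ) (x : HX ν) : Hl2 ν :=
  ((ν : ℝ) ^ r)⁻¹ • ∑ y ∈ (cube ν r x).toFinset, hdelta ν y

theorem cubeUniform_apply (r : ℕ) (x z : HX ν) :
    cubeUniform ν r x z = (cube ν r x).indicator (fun _ => ((ν : ℝ) ^ r)⁻¹) z := by
  classical
  rw [cubeUniform, lp.coeFn_smul, Pi.smul_apply, lp.coeFn_sum, Finset.sum_apply]
  simp [hdelta, Finset.sum_pi_single, Set.indicator_apply]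

theorem cubeUniform_zero (x : HX ν) : cubeUniform ν 0 x = hdelta ν x := by
  simp [cubeUniform, Set.toFinset_congr (cube_zero x)]

theorem cubeSum_cubeUniform_of_le {r s : ℕ} (hrs : r ≤ s) (x z : HX ν) :
    ((ν : ℝ) ^ r)⁻¹ * cubeSum ν r z (cubeUniform ν s x) = cubeUniform ν s x z := by
  have hconst : ∀ y ∈ (cube ν r z).toFinset, cubeUniform ν s x y = cubeUniform ν s x z := by
    intro y hy
    have hcube : cube ν s y = cube ν s z :=
      cube_eq_of_mem (cube_mono hrs z (Set.mem_toFinset.1 hy))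
    have hmem : y ∈ cube ν s x ↔ z ∈ cube ν s x := by
      rw [mem_cube_comm, hcube, ← mem_cube_comm]
    classical
    simp only [cubeUniform_apply, Set.indicator_apply, hmem]
  have hν : (ν : ℝ) ^ r ≠ 0 := pow_ne_zero _ (Nat.cast_ne_zero.2 z.pos_card.ne')
  rw [cubeSum_eq_sum, Finset.sum_congr rfl hconst, Finset.sum_const, card_toFinset_cube,
    nsmul_eq_mul, Nat.cast_pow, inv_mul_cancel_left₀ hν]

theorem cubeSum_cubeUniform_of_ge {r s : ℕ} (hsr : s ≤ r) (x z : HX ν) :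
    ((ν : ℝ) ^ r)⁻¹ * cubeSum ν r z (cubeUniform ν s x) = cubeUniform ν r x z := by
  simp only [cubeSum_eq_sum, cubeUniform_apply]
  by_cases hz : z ∈ cube ν r x
  · have hsub : (cube ν s x).toFinset ⊆ (cube ν r z).toFinset :=
      Set.toFinset_subset_toFinset.2 (cube_eq_of_mem hz ▸ cube_mono hsr x)
    have hν : (ν : ℝ) ^ s ≠ 0 := pow_ne_zero _ (Nat.cast_ne_zero.2 z.pos_card.ne')
    rw [← Set.coe_toFinset (cube ν s x), Finset.sum_indicator_subset _ hsub,
      Set.indicator_of_mem hz, Finset.sum_const, card_toFinset_cube, nsmul_eq_mul, Nat.cast_pow,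
      mul_inv_cancel₀ hν, mul_one]
  · rw [Set.indicator_of_notMem hz, Finset.sum_eq_zero, mul_zero]
    intro y hy
    refine Set.indicator_of_notMem (fun hyx => hz ?_) _
    rw [← cube_eq_of_mem (cube_mono hsr x hyx)]
    exact mem_cube_comm.1 (Set.mem_toFinset.1 hy)

theorem norm_cubeUniform (r : ℕ) (x : HX ν) : ‖cubeUniform ν r x‖ = √(ν : ℝ)⁻¹ ^ r := by
  have hν : (0 : ℝ) < ν := Nat.cast_pos.2 x.pos_card
  have hsum : ‖∑ y ∈ (cube ν r x).toFinset, hdelta ν y‖ ^ 2 = (ν : ℝ) ^ r := by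
    have := lp.norm_sum_single (E := fun _ : HX ν => ℝ) (p := 2) (by norm_num)
      (fun _ => 1) (cube ν r x).toFinset
    simpa [hdelta, ← Set.toFinset_card, card_toFinset_cube] using this
  have hsq : ‖cubeUniform ν r x‖ ^ 2 = (√(ν : ℝ)⁻¹ ^ r) ^ 2 := by
    rw [cubeUniform, norm_smul, mul_pow, hsum, ← pow_mul, mul_comm r, pow_mul,
      Real.sq_sqrt (by positivity), norm_inv, norm_pow, Real.norm_natCast]
    field_simp
    rw [← mul_pow, mul_one_div_cancel hν.ne', one_pow]
  exact (sq_eq_sq₀ (norm_nonneg _) (by positivity)).1 hsq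

theorem summable_cubeUniform (hν : 2 ≤ ν) (x : HX ν) : Summable (cubeUniform ν · x) := by
  refine .of_norm ?_
  simp only [norm_cubeUniform]
  refine summable_geometric_of_lt_one (Real.sqrt_nonneg _) ((Real.sqrt_lt' one_pos).2 ?_)
  rw [one_pow]
  exact inv_lt_one_of_one_lt₀ (by exact_mod_cast hν)

def cubeEigen (ν s : ℕ) (x : HX ν) : Hl2 ν := cubeUniform ν s x - cubeUniform ν (s + 1) x

theorem hasSum_cubeEigen (hν : 2 ≤ ν) (x : HX ν) : HasSum (cubeEigen ν · x) (hdelta ν x) := by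
  simpa only [cubeEigen, cubeUniform_zero] using (summable_cubeUniform hν x).hasSum_sub_succ

theorem cubeEigen_apply_self (s : ℕ) (x : HX ν) :
    cubeEigen ν s x x = (1 - (ν : ℝ)⁻¹) / (ν : ℝ) ^ s := by
  have hν : (ν : ℝ) ≠ 0 := Nat.cast_ne_zero.2 x.pos_card.ne'
  rw [cubeEigen, lp.coeFn_sub, Pi.sub_apply, cubeUniform_apply, cubeUniform_apply,
    Set.indicator_of_mem (mem_cube_self s x), Set.indicator_of_mem (mem_cube_self (s + 1) x)]
  field_simp
  ring

theorem _root_.IsHierLap.apply_cubeEigen {p : ℝ} (hp : |p| < 1) {Δ : Hl2 ν →L[ℝ] Hl2 ν}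
    (hΔ : IsHierLap ν p Δ) (s : ℕ) (x : HX ν) :
    Δ (cubeEigen ν s x) = (-p ^ s) • cubeEigen ν s x := by
  ext z
  have hterm : ∀ r : ℕ, (1 - p) * p ^ r * (((ν : ℝ) ^ (r + 1))⁻¹ *
        cubeSum ν (r + 1) z (cubeEigen ν s x) - cubeEigen ν s x z) =
      (if s ≤ r then (1 - p) * p ^ r else 0) * -cubeEigen ν s x z := by
    intro r
    rw [cubeEigen, cubeSum_sub, mul_sub ((ν : ℝ) ^ (r + 1))⁻¹]
    split_ifs with hsr
    · rw [cubeSum_cubeUniform_of_ge (by omega), cubeSum_cubeUniform_of_ge (by omega),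
        lp.coeFn_sub, Pi.sub_apply]
      ring
    · rw [cubeSum_cubeUniform_of_le (by omega), cubeSum_cubeUniform_of_le (by omega),
        lp.coeFn_sub, Pi.sub_apply]
      ring
  rw [hΔ, tsum_congr hterm, tsum_mul_right, (hasSum_ite_geometric_tail hp s).tsum_eq,
    lp.coeFn_smul, Pi.smul_apply, smul_eq_mul]
  ring

end HierarchicalLaplacian

open HierarchicalLaplacian in
theorem stmt5 (ν : ℕ) (hν : 2 ≤ ν) (p : ℝ) (hp0 : 0 < p) (hp1 : p < 1)
    (Δ : Hl2 ν →L[ℝ] Hl2 ν) (hΔ : IsHierLap ν p Δ) :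
    ∀ x : HX ν, ∀ t : ℝ, 0 ≤ t →
      heatK ν Δ t x x =
        (1 - (ν : ℝ)⁻¹) * ∑' s : ℕ, Real.exp (-(p ^ s * t)) / (ν : ℝ) ^ s := by
  intro x t _
  have hp : |p| < 1 := abs_lt.2 ⟨by linarith, hp1⟩
  have hexp : ∀ s, NormedSpace.exp (t • Δ) (cubeEigen ν s x) =
      Real.exp (-(p ^ s * t)) • cubeEigen ν s x := fun s => by
    rw [Real.exp_eq_exp_ℝ]
    refine NormedSpace.exp_apply_of_apply_eq_smul ?_
    rw [smul_apply, hΔ.apply_cubeEigen hp, smul_smul, mul_neg, mul_comm]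
  have hsum : HasSum (fun s => Real.exp (-(p ^ s * t)) * cubeEigen ν s x x) (heatK ν Δ t x x) := by
    have hδ := ((hasSum_cubeEigen hν x).mapL (NormedSpace.exp (t • Δ))).mapL
      (lp.evalCLM ℝ (fun _ : HX ν => ℝ) 2 x)
    simpa [heatK, hdelta, lp.inner_single_right, hexp, lp.evalCLM] using hδ
  rw [← hsum.tsum_eq, ← tsum_mul_left]
  refine tsum_congr fun s => ?_
  rw [cubeEigen_apply_self]
  ring
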